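/- Let α ≥ 0, α ≠ 1, let K ≥ 1, and let b₁, ..., b_K be real numbers. If α ∈ [0,1), let Z be the unique real number such that the vector v* with v*_i = exp_α( max{ −b_i − Z, −1/(1−α) } ) satisfies Σ_i v*_i = 1; if α > 1, let Z be the unique real number such that v*_i = exp_α( −b_i − Z ) satisfies Σ_i v*_i = 1. In either case, v* is a minimizer of min_{v ∈ Δ_K} max_{m ∈ Δ_K} Σ_{i=1}^K ( ℓ_α(v, i) − b_i ) m_i. (Applied with b_i = φ_i^{*c}(x̃) for a dual optimizer, this gives the optimal robust classifier for the α-logarithmic loss.) -/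

import Mathlib

/-!
The vector `v*` equalizes the adjusted losses: `ℓ_α(v*, i) - b_i ≤ Z` for every `i`, with
equality where `v*_i > 0`, so every mixture over `m` gives `v*` an objective of at most `Z`.
Conversely, if some `v ∈ Δ_K` had `ℓ_α(v, i) - b_i < Z` for all `i`, monotonicity of `exp_α`
would give `v*_i ≤ v_i`, strictly where `v_i > 0`; summing contradicts `∑ v*_i = 1 = ∑ v_i`.
So the objective of `v` is at least `Z`, attained by a point mass `m`.
-/

open scoped ENNReal BigOperators

noncomputable section

/-- The `α`-logarithm `log_α(t) = (t^{1−α} − 1)/(1−α)`. -/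
def logAlpha (α t : ℝ) : ℝ := (t ^ (1 - α) - 1) / (1 - α)

/-- The `α`-exponential `exp_α(s) = ((1−α)s + 1)^{1/(1−α)}`. -/
def expAlpha (α s : ℝ) : ℝ := ((1 - α) * s + 1) ^ (1 / (1 - α))

/-- The `α`-logarithmic loss `ℓ_α(v,i) = −log_α(v_i)` as a function of
`t = v_i ∈ [0,1]`: for `t > 0` it is `−log_α(t)`; at `t = 0` it equals
`1/(1−α)` when `α ∈ [0,1)` and `+∞` when `α > 1`. -/
def lossAlpha (α t : ℝ) : EReal :=
  if 0 < t then ((-logAlpha α t : ℝ) : EReal)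
  else if α < 1 then ((1 / (1 - α) : ℝ) : EReal) else ⊤

/-- The inner max-objective `max_{m ∈ Δ_K} ∑_i (ℓ_α(v,i) − b_i) m_i`. -/
def alphaMinimaxObj (α : ℝ) {K : ℕ} (b : Fin K → ℝ) (v : Fin K → ℝ) : EReal :=
  ⨆ m ∈ stdSimplex ℝ (Fin K),
    ∑ i, (m i : EReal) * (lossAlpha α (v i) - (b i : EReal))

@[norm_cast]
lemma EReal.coe_finset_sum {ι : Type*} (s : Finset ι) (f : ι → ℝ) :
    ((∑ i ∈ s, f i : ℝ) : EReal) = ∑ i ∈ s, (f i : EReal) :=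
  map_sum (⟨⟨(↑), EReal.coe_zero⟩, EReal.coe_add⟩ : ℝ →+ EReal) f s

section Simplex

variable {ι : Type*} [Fintype ι]

lemma iSup_stdSimplex_sum_mul_le {x : ι → EReal} {c : ℝ} (h : ∀ i, x i ≤ c) :
    ⨆ m ∈ stdSimplex ℝ ι, ∑ i, (m i : EReal) * x i ≤ c := by
  refine iSup₂_le fun m hm => ?_
  calc ∑ i, (m i : EReal) * x i ≤ ∑ i, (m i : EReal) * c :=
        Finset.sum_le_sum fun i _ => mul_le_mul_of_nonneg_left (h i) (EReal.coe_nonneg.2 (hm.1 i))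
    _ = c := by norm_cast; rw [← Finset.sum_mul, hm.2, one_mul]

lemma le_iSup_stdSimplex_sum_mul [DecidableEq ι] (x : ι → EReal) (j : ι) :
    x j ≤ ⨆ m ∈ stdSimplex ℝ ι, ∑ i, (m i : EReal) * x i := by
  refine le_iSup₂_of_le (Pi.single j 1) (single_mem_stdSimplex ℝ j) (le_of_eq ?_)
  rw [Finset.sum_eq_single j (fun i _ hij => by simp [Pi.single_eq_of_ne hij]) (by simp)]
  simp

end Simplex

section AlphaLog

variable {α : ℝ}

lemma one_sub_mul_add_one_eq (hα : α ≠ 1) (s : ℝ) :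
    (1 - α) * s + 1 = (1 - α) * (s - -(1 / (1 - α))) := by
  have : 1 - α ≠ 0 := sub_ne_zero.2 hα.symm
  field_simp
  ring

lemma one_sub_mul_logAlpha_add_one (hα : α ≠ 1) (t : ℝ) :
    (1 - α) * logAlpha α t + 1 = t ^ (1 - α) := by
  have : 1 - α ≠ 0 := sub_ne_zero.2 hα.symm
  unfold logAlpha
  field_simp
  ring

lemma expAlpha_logAlpha (hα : α ≠ 1) {t : ℝ} (ht : 0 < t) :
    expAlpha α (logAlpha α t) = t := by
  rw [expAlpha, one_sub_mul_logAlpha_add_one hα, ← Real.rpow_mul ht.le,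
    mul_one_div_cancel (sub_ne_zero.2 hα.symm), Real.rpow_one]

lemma logAlpha_expAlpha (hα : α ≠ 1) {s : ℝ} (hs : 0 < (1 - α) * s + 1) :
    logAlpha α (expAlpha α s) = s := by
  have : 1 - α ≠ 0 := sub_ne_zero.2 hα.symm
  rw [logAlpha, expAlpha, ← Real.rpow_mul hs.le, one_div_mul_cancel this, Real.rpow_one]
  field_simp
  ring

lemma expAlpha_pos {s : ℝ} (hs : 0 < (1 - α) * s + 1) : 0 < expAlpha α s :=
  Real.rpow_pos_of_pos hs _

lemma expAlpha_neg_one_div_one_sub (hα : α ≠ 1) : expAlpha α (-(1 / (1 - α))) = 0 := by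
  have : 1 - α ≠ 0 := sub_ne_zero.2 hα.symm
  rw [expAlpha, one_sub_mul_add_one_eq hα, sub_self, mul_zero,
    Real.zero_rpow (one_div_ne_zero this)]

lemma expAlpha_lt_expAlpha (hα : α ≠ 1) {s s' : ℝ} (hs : 0 ≤ (1 - α) * s + 1)
    (hs' : 0 < (1 - α) * s' + 1) (h : s < s') : expAlpha α s < expAlpha α s' := by
  rcases hα.lt_or_gt with hlt | hgt
  · have h1α : 0 < 1 - α := sub_pos.2 hlt
    exact Real.rpow_lt_rpow hs (by nlinarith) (one_div_pos.2 h1α)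
  · have h1α : 1 - α < 0 := sub_neg.2 hgt
    exact Real.rpow_lt_rpow_of_neg hs' (by nlinarith) (one_div_neg.2 h1α)

lemma neg_one_div_one_sub_lt_logAlpha (hα : α < 1) {t : ℝ} (ht : 0 < t) :
    -(1 / (1 - α)) < logAlpha α t := by
  have h1α : 0 < 1 - α := sub_pos.2 hα
  have hpos : 0 < (1 - α) * (logAlpha α t - -(1 / (1 - α))) := by
    rw [← one_sub_mul_add_one_eq hα.ne, one_sub_mul_logAlpha_add_one hα.ne]
    exact Real.rpow_pos_of_pos ht _
  linarith [pos_of_mul_pos_right hpos h1α.le]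

lemma lossAlpha_of_pos {t : ℝ} (ht : 0 < t) : lossAlpha α t = ((-logAlpha α t : ℝ) : EReal) :=
  if_pos ht

lemma lossAlpha_zero_of_lt_one (hα : α < 1) :
    lossAlpha α 0 = ((1 / (1 - α) : ℝ) : EReal) := by
  simp [lossAlpha, hα]

lemma lossAlpha_zero_of_one_le (hα : 1 ≤ α) : lossAlpha α 0 = ⊤ := by
  simp [lossAlpha, hα.not_gt]

lemma lossAlpha_expAlpha (hα : α ≠ 1) {s : ℝ} (hs : 0 < (1 - α) * s + 1) :
    lossAlpha α (expAlpha α s) = ((-s : ℝ) : EReal) := by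
  rw [lossAlpha_of_pos (expAlpha_pos hs), logAlpha_expAlpha hα hs]

end AlphaLog

/-- `v*_i = truncExpAlpha α (-b_i - Z)`; the clipping point `-1/(1-α)` is where `exp_α`
vanishes. -/
def truncExpAlpha (α s : ℝ) : ℝ :=
  if α < 1 then expAlpha α (max s (-(1 / (1 - α)))) else expAlpha α s

section TruncExpAlpha

variable {α s : ℝ}

lemma one_sub_mul_add_one_pos_of_one_lt (hα : 1 < α) (hs : s < -(1 / (1 - α))) :
    0 < (1 - α) * s + 1 := by
  rw [one_sub_mul_add_one_eq hα.ne']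
  exact mul_pos_of_neg_of_neg (sub_neg.2 hα) (sub_neg.2 hs)

lemma one_sub_mul_max_add_one_nonneg (hα : α < 1) :
    0 ≤ (1 - α) * max s (-(1 / (1 - α))) + 1 := by
  rw [one_sub_mul_add_one_eq hα.ne]
  exact mul_nonneg (sub_pos.2 hα).le (sub_nonneg.2 (le_max_right _ _))

lemma truncExpAlpha_nonneg (hα : α ≠ 1) (hs : 1 < α → s < -(1 / (1 - α))) :
    0 ≤ truncExpAlpha α s := by
  unfold truncExpAlpha
  split_ifs with h
  · exact Real.rpow_nonneg (one_sub_mul_max_add_one_nonneg h) _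
  · have hgt : 1 < α := lt_of_le_of_ne (not_lt.1 h) hα.symm
    exact (expAlpha_pos (one_sub_mul_add_one_pos_of_one_lt hgt (hs hgt))).le

lemma lossAlpha_truncExpAlpha_le (hα : α ≠ 1) (hs : 1 < α → s < -(1 / (1 - α))) :
    lossAlpha α (truncExpAlpha α s) ≤ ((-s : ℝ) : EReal) := by
  unfold truncExpAlpha
  split_ifs with h
  · rcases le_or_gt s (-(1 / (1 - α))) with hle | hgt
    · rw [max_eq_right hle, expAlpha_neg_one_div_one_sub hα, lossAlpha_zero_of_lt_one h]
      exact EReal.coe_le_coe_iff.2 (by linarith)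
    · have hbase : 0 < (1 - α) * s + 1 := by
        rw [one_sub_mul_add_one_eq hα]
        exact mul_pos (sub_pos.2 h) (sub_pos.2 hgt)
      rw [max_eq_left hgt.le, lossAlpha_expAlpha hα hbase]
  · have hgt : 1 < α := lt_of_le_of_ne (not_lt.1 h) hα.symm
    rw [lossAlpha_expAlpha hα (one_sub_mul_add_one_pos_of_one_lt hgt (hs hgt))]

lemma truncExpAlpha_lt_of_lossAlpha_lt (hα : α ≠ 1) {t : ℝ} (ht : 0 < t)
    (h : lossAlpha α t < ((-s : ℝ) : EReal)) : truncExpAlpha α s < t := by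
  rw [lossAlpha_of_pos ht, EReal.coe_lt_coe_iff] at h
  have hlog : s < logAlpha α t := by linarith
  have hbase : 0 < (1 - α) * logAlpha α t + 1 := by
    rw [one_sub_mul_logAlpha_add_one hα]
    exact Real.rpow_pos_of_pos ht _
  conv_rhs => rw [← expAlpha_logAlpha hα ht]
  unfold truncExpAlpha
  split_ifs with hlt
  · exact expAlpha_lt_expAlpha hα (one_sub_mul_max_add_one_nonneg hlt) hbase
      (max_lt hlog (neg_one_div_one_sub_lt_logAlpha hlt ht))
  · have h1α : 1 - α ≤ 0 := by linarith [not_lt.1 hlt]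
    exact expAlpha_lt_expAlpha hα (by nlinarith) hbase hlog

lemma truncExpAlpha_le_of_lossAlpha_lt (hα : α ≠ 1) {t : ℝ} (ht : 0 ≤ t)
    (h : lossAlpha α t < ((-s : ℝ) : EReal)) : truncExpAlpha α s ≤ t := by
  rcases ht.eq_or_lt with rfl | hpos
  · by_cases hlt : α < 1
    · rw [lossAlpha_zero_of_lt_one hlt, EReal.coe_lt_coe_iff] at h
      rw [truncExpAlpha, if_pos hlt, max_eq_right (by linarith), expAlpha_neg_one_div_one_sub hα]
    · rw [lossAlpha_zero_of_one_le (not_lt.1 hlt)] at h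
      exact absurd h not_top_lt
  · exact (truncExpAlpha_lt_of_lossAlpha_lt hα hpos h).le

end TruncExpAlpha

section Minimax

variable {α : ℝ}

lemma lossAlpha_truncExpAlpha_sub_le (hα : α ≠ 1) {c Z : ℝ}
    (hc : 1 < α → -c - Z < -(1 / (1 - α))) :
    lossAlpha α (truncExpAlpha α (-c - Z)) - c ≤ Z := by
  rw [EReal.sub_le_iff_le_add (.inl (EReal.coe_ne_bot c)) (.inl (EReal.coe_ne_top c))]
  simpa only [neg_sub, sub_neg_eq_add, EReal.coe_add] using lossAlpha_truncExpAlpha_le hα hc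

lemma exists_le_lossAlpha_sub {ι : Type*} [Fintype ι] (hα : α ≠ 1) {b : ι → ℝ} {Z : ℝ}
    (hsum : ∑ i, truncExpAlpha α (-(b i) - Z) = 1) {v : ι → ℝ}
    (hv : v ∈ stdSimplex ℝ ι) :
    ∃ j, (Z : EReal) ≤ lossAlpha α (v j) - b j := by
  by_contra! hlt
  have hloss : ∀ j, lossAlpha α (v j) < ((-(-(b j) - Z) : ℝ) : EReal) := fun j => by
    rw [neg_sub, sub_neg_eq_add, EReal.coe_add]
    exact (EReal.sub_lt_iff (.inl (EReal.coe_ne_bot _)) (.inl (EReal.coe_ne_top _))).1 (hlt j)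
  obtain ⟨j, -, hj⟩ : ∃ j ∈ Finset.univ, (0 : ι → ℝ) j < v j :=
    Finset.exists_lt_of_sum_lt (by simp [hv.2])
  have hlt_sum : ∑ i, truncExpAlpha α (-(b i) - Z) < ∑ i, v i :=
    Finset.sum_lt_sum (fun i _ => truncExpAlpha_le_of_lossAlpha_lt hα (hv.1 i) (hloss i))
      ⟨j, Finset.mem_univ _, truncExpAlpha_lt_of_lossAlpha_lt hα hj (hloss j)⟩
  rw [hsum, hv.2] at hlt_sum
  exact lt_irrefl _ hlt_sum

end Minimax

theorem statement5_general (α : ℝ) (hα1 : α ≠ 1)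
    {K : ℕ} (b : Fin K → ℝ) (Z : ℝ)
    (hdom : 1 < α → ∀ i, -(b i) - Z < -(1 / (1 - α)))
    (hsum : ∑ i, (if α < 1 then expAlpha α (max (-(b i) - Z) (-(1 / (1 - α))))
        else expAlpha α (-(b i) - Z)) = 1) :
    (fun i => if α < 1 then expAlpha α (max (-(b i) - Z) (-(1 / (1 - α))))
        else expAlpha α (-(b i) - Z)) ∈ stdSimplex ℝ (Fin K) ∧
    ∀ v ∈ stdSimplex ℝ (Fin K),
      alphaMinimaxObj α b
        (fun i => if α < 1 then expAlpha α (max (-(b i) - Z) (-(1 / (1 - α))))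
          else expAlpha α (-(b i) - Z))
        ≤ alphaMinimaxObj α b v := by
  change ∑ i, truncExpAlpha α (-(b i) - Z) = 1 at hsum
  change (fun i => truncExpAlpha α (-(b i) - Z)) ∈ _ ∧
    ∀ v ∈ _, alphaMinimaxObj α b (fun i => truncExpAlpha α (-(b i) - Z)) ≤ _
  have hdom' (i : Fin K) : 1 < α → -(b i) - Z < -(1 / (1 - α)) := fun h => hdom h i
  refine ⟨⟨fun i => truncExpAlpha_nonneg hα1 (hdom' i), hsum⟩, fun v hv => ?_⟩
  obtain ⟨j, hj⟩ := exists_le_lossAlpha_sub hα1 hsum hv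
  calc alphaMinimaxObj α b (fun i => truncExpAlpha α (-(b i) - Z))
      ≤ Z := iSup_stdSimplex_sum_mul_le fun i => lossAlpha_truncExpAlpha_sub_le hα1 (hdom' i)
    _ ≤ lossAlpha α (v j) - b j := hj
    _ ≤ alphaMinimaxObj α b v :=
      le_iSup_stdSimplex_sum_mul (fun i => lossAlpha α (v i) - b i) j

/-- Corollary 1.13 (finite-dimensional form): with the appropriate
normalization `Z`, the vector `v*` given by the truncated `α`-exponential
formulas minimizes `min_{v ∈ Δ_K} max_{m ∈ Δ_K} ∑_i (ℓ_α(v,i) − b_i) m_i`. -/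
theorem statement5 (α : ℝ) (hα0 : 0 ≤ α) (hα1 : α ≠ 1)
    {K : ℕ} (hK : 1 ≤ K) (b : Fin K → ℝ) (Z : ℝ)
    (hdom : 1 < α → ∀ i, -(b i) - Z < -(1 / (1 - α)))
    (hsum : ∑ i, (if α < 1 then expAlpha α (max (-(b i) - Z) (-(1 / (1 - α))))
        else expAlpha α (-(b i) - Z)) = 1) :
    (fun i => if α < 1 then expAlpha α (max (-(b i) - Z) (-(1 / (1 - α))))
        else expAlpha α (-(b i) - Z)) ∈ stdSimplex ℝ (Fin K) ∧
    ∀ v ∈ stdSimplex ℝ (Fin K),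
      alphaMinimaxObj α b
        (fun i => if α < 1 then expAlpha α (max (-(b i) - Z) (-(1 / (1 - α))))
          else expAlpha α (-(b i) - Z))
        ≤ alphaMinimaxObj α b v :=
  statement5_general α hα1 b Z hdom hsum
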